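/- For 0<|q|<1 and parameters A_1,...,A_L, B_1,...,B_L with A_1⋯A_L = B_1⋯B_L (and no denominator vanishing), the limit as k → ∞ of ∏_{i=1}^L (A_i q^{-k};q)_k / (B_i q^{-k};q)_k equals ∏_{i=1}^L (q/A_i;q)_∞ / (q/B_i;q)_∞. -/

import Mathlib

open Filter

noncomputable def qp (q a : ℂ) (n : ℕ) : ℂ := ∏ i ∈ Finset.range n, (1 - a * q ^ i)

noncomputable def qpInf (q a : ℂ) : ℂ := ∏' i : ℕ, (1 - a * q ^ i)

/-!
Reversing the order of the factors of `(a q^{-k}; q)_k` gives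
`(a q^{-k}; q)_k = (-a)^k q^{-k(k+1)/2} (q/a; q)_k`. In the ratio of the `A`- and `B`-products the
powers of `q` cancel and `∏ (A_i/B_i)^k = 1`, so the sequence equals `∏ (q/A_i;q)_k / (q/B_i;q)_k`,
which converges to the claimed limit since the infinite products converge and the `B`-ones do not
vanish.
-/

open Finset

section QPochhammer

variable {q : ℂ}

lemma summable_norm_mul_pow (a : ℂ) (hq : ‖q‖ < 1) : Summable fun n : ℕ => ‖-(a * q ^ n)‖ := by
  simpa [norm_mul, norm_pow] using
    (summable_geometric_of_lt_one (norm_nonneg q) hq).mul_left ‖a‖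

lemma tendsto_qp_qpInf (a : ℂ) (hq : ‖q‖ < 1) : Tendsto (qp q a) atTop (nhds (qpInf q a)) := by
  have h := multipliable_one_add_of_summable (summable_norm_mul_pow a hq)
  simp only [← sub_eq_add_neg] at h
  exact h.hasProd.tendsto_prod_nat

lemma qpInf_ne_zero {a : ℂ} (hq : ‖q‖ < 1) (ha : ∀ m : ℕ, 1 - a * q ^ m ≠ 0) :
    qpInf q a ≠ 0 := by
  have h := tprod_one_add_ne_zero_of_summable (f := fun n => -(a * q ^ n))
    (by simpa only [← sub_eq_add_neg] using ha) (summable_norm_mul_pow a hq)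
  simpa only [qpInf, ← sub_eq_add_neg] using h

lemma one_sub_div_mul_pow_ne_zero {b : ℂ} (hb : b ≠ 0) (hbq : ∀ m : ℕ, b ≠ q ^ (m + 1))
    (m : ℕ) : 1 - q / b * q ^ m ≠ 0 := by
  intro h
  apply hbq m
  field_simp at h
  linear_combination h

lemma qp_mul_inv_pow (hq : q ≠ 0) {a : ℂ} (ha : a ≠ 0) (k : ℕ) :
    qp q (a * (q ^ k)⁻¹) k = ((-a) ^ k * ∏ j ∈ range k, (q ^ (j + 1))⁻¹) * qp q (q / a) k := by
  have hfactor : ∀ j ∈ range k, 1 - a * (q ^ k)⁻¹ * q ^ (k - 1 - j)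
      = -a * (q ^ (j + 1))⁻¹ * (1 - q / a * q ^ j) := by
    intro j hj
    have hpow : q ^ (k - 1 - j) * q ^ (j + 1) = q ^ k := by
      rw [← pow_add]
      congr 1
      have := mem_range.mp hj
      omega
    rw [← hpow]
    field_simp
    ring
  rw [qp, ← prod_range_reflect, prod_congr rfl hfactor, prod_mul_distrib, prod_mul_distrib,
    prod_const, card_range, qp]

lemma qp_mul_inv_pow_div (hq : q ≠ 0) {a b : ℂ} (ha : a ≠ 0) (hb : b ≠ 0) (k : ℕ) :
    qp q (a * (q ^ k)⁻¹) k / qp q (b * (q ^ k)⁻¹) k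
      = (a / b) ^ k * (qp q (q / a) k / qp q (q / b) k) := by
  have hpow : ∏ j ∈ range k, (q ^ (j + 1))⁻¹ ≠ 0 :=
    prod_ne_zero_iff.mpr fun j _ => inv_ne_zero (pow_ne_zero _ hq)
  rw [qp_mul_inv_pow hq ha, qp_mul_inv_pow hq hb, mul_div_mul_comm, mul_div_mul_right _ _ hpow,
    ← div_pow, neg_div_neg_eq]

lemma prod_qp_mul_inv_pow_div {ι : Type*} [Fintype ι] (hq : q ≠ 0) {A B : ι → ℂ}
    (hA : ∀ i, A i ≠ 0) (hB : ∀ i, B i ≠ 0) (hprod : ∏ i, A i = ∏ i, B i) (k : ℕ) :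
    ∏ i, qp q (A i * (q ^ k)⁻¹) k / qp q (B i * (q ^ k)⁻¹) k
      = ∏ i, qp q (q / A i) k / qp q (q / B i) k := by
  simp_rw [qp_mul_inv_pow_div hq (hA _) (hB _)]
  rw [prod_mul_distrib, prod_pow, prod_div_distrib, hprod,
    div_self (prod_ne_zero_iff.mpr fun i _ => hB i), one_pow, one_mul]

end QPochhammer

theorem stmt3_general (q : ℂ) (hq0 : 0 < ‖q‖) (hq1 : ‖q‖ < 1)
    (L : ℕ) (A B : Fin L → ℂ) (hA : ∀ i, A i ≠ 0) (hB : ∀ i, B i ≠ 0)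
    (hprod : ∏ i, A i = ∏ i, B i)
    (hBq : ∀ i (m : ℕ), B i ≠ q ^ (m + 1)) :
    Tendsto (fun k : ℕ => ∏ i, qp q (A i * (q ^ k)⁻¹) k / qp q (B i * (q ^ k)⁻¹) k)
      atTop (nhds (∏ i, qpInf q (q / A i) / qpInf q (q / B i))) := by
  have hq : q ≠ 0 := norm_pos_iff.mp hq0
  simp_rw [prod_qp_mul_inv_pow_div hq hA hB hprod]
  refine tendsto_finsetProd _ fun i _ => ?_
  exact (tendsto_qp_qpInf _ hq1).div (tendsto_qp_qpInf _ hq1)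
    (qpInf_ne_zero hq1 (one_sub_div_mul_pow_ne_zero (hB i) (hBq i)))

theorem stmt3 (q : ℂ) (hq0 : 0 < ‖q‖) (hq1 : ‖q‖ < 1)
    (L : ℕ) (A B : Fin L → ℂ) (hA : ∀ i, A i ≠ 0) (hB : ∀ i, B i ≠ 0)
    (hprod : ∏ i, A i = ∏ i, B i)
    (hAq : ∀ i (m : ℕ), A i ≠ q ^ (m + 1)) (hBq : ∀ i (m : ℕ), B i ≠ q ^ (m + 1)) :
    Tendsto (fun k : ℕ => ∏ i, qp q (A i * (q ^ k)⁻¹) k / qp q (B i * (q ^ k)⁻¹) k)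
      atTop (nhds (∏ i, qpInf q (q / A i) / qpInf q (q / B i))) :=
  stmt3_general q hq0 hq1 L A B hA hB hprod hBq
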